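/- Let d = 4, 𝕊 = {{1,2},{2,3},{3,4},{1,4}}, X_1 = [r] for some r ∈ ℕ, and X_2 = X_3 = X_4 = [2]. Then for every consistent family P_𝕊 ∈ 𝒫_𝕊^cons, R(P_𝕊) = 2 max_{k,ℓ ∈ [2]} { p_{••kℓ} − p_{•2k•} − ∑_{i=1}^r min(p_{i1••}, p_{i••ℓ}) }_+, where p_{••kℓ} = P_{{3,4}}({(k,ℓ)}), p_{•2k•} = P_{{2,3}}({(2,k)}), p_{i1••} = P_{{1,2}}({(i,1)}), p_{i••ℓ} = P_{{1,4}}({(i,ℓ)}), and y_+ = max(y,0). -/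

import Mathlib

/-
Testing `P_𝕊` against `4 · 1_{A_S} - 1`, for sets `A_S` whose cylinders cover `X`, gives the
value `1 - ∑_S P_S(A_S)`, and an explicit cover attains `2 · chainDefect k l`. Conversely, let
`T` on `X₁ × X₂ × X₄` and `ν` on `X₂ × X₃ × X₄` have two-dimensional marginals dominated by the
`P_S` and a common `(x₂, x₄)`-marginal of mass `m`. Pairing an admissible `f` with these
marginals gives something nonnegative, and since `f ≥ -1` replacing them by the `P_S` costs at
most `4 (1 - m)`; hence `R ≤ 1 - m`. All couplings needed are `2 × 2` tables fixed by their
corner entry. If no defect is positive, the ranges of the summed corners on the two sides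
overlap and `m = 1`; if `δ = chainDefect k l > 0`, removing mass `δ` from every marginal makes
them overlap, and `m = 1 - 2δ`.
-/

/-- The family `(P_{{1,2}}, P_{{2,3}}, P_{{3,4}}, P_{{1,4}})` of mass functions on
`[r] × [2] × [2] × [2]` consists of probability mass functions. -/
def ProbChain (r : ℕ) (p12 : Fin r → Fin 2 → ℝ) (p23 p34 : Fin 2 → Fin 2 → ℝ)
    (p14 : Fin r → Fin 2 → ℝ) : Prop :=
  (∀ i j, 0 ≤ p12 i j) ∧ (∀ j k, 0 ≤ p23 j k) ∧ (∀ k l, 0 ≤ p34 k l) ∧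
    (∀ i l, 0 ≤ p14 i l) ∧ (∑ i, ∑ j, p12 i j = 1) ∧ (∑ j, ∑ k, p23 j k = 1) ∧
    (∑ k, ∑ l, p34 k l = 1) ∧ (∑ i, ∑ l, p14 i l = 1)

/-- Consistency of the chain family: the overlapping single-coordinate margins agree. -/
def ConsChain (r : ℕ) (p12 : Fin r → Fin 2 → ℝ) (p23 p34 : Fin 2 → Fin 2 → ℝ)
    (p14 : Fin r → Fin 2 → ℝ) : Prop :=
  (∀ i, ∑ j, p12 i j = ∑ l, p14 i l) ∧
    (∀ j, ∑ i, p12 i j = ∑ k, p23 j k) ∧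
    (∀ k, ∑ j, p23 j k = ∑ l, p34 k l) ∧
    (∀ l, ∑ k, p34 k l = ∑ i, p14 i l)

/-- The incompatibility index `R(P_𝕊)` for `𝕊 = {{1,2},{2,3},{3,4},{1,4}}`. -/
noncomputable def RChain (r : ℕ) (p12 : Fin r → Fin 2 → ℝ) (p23 p34 : Fin 2 → Fin 2 → ℝ)
    (p14 : Fin r → Fin 2 → ℝ) : ℝ :=
  sSup {t | ∃ (f12 : Fin r → Fin 2 → ℝ) (f23 f34 : Fin 2 → Fin 2 → ℝ)
      (f14 : Fin r → Fin 2 → ℝ),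
    (∀ i j, -1 ≤ f12 i j) ∧ (∀ j k, -1 ≤ f23 j k) ∧ (∀ k l, -1 ≤ f34 k l) ∧
    (∀ i l, -1 ≤ f14 i l) ∧
    (∀ i j k l, 0 ≤ f12 i j + f23 j k + f34 k l + f14 i l) ∧
    t = -(1 / 4) * ((∑ i, ∑ j, f12 i j * p12 i j) + (∑ j, ∑ k, f23 j k * p23 j k) +
          (∑ k, ∑ l, f34 k l * p34 k l) + (∑ i, ∑ l, f14 i l * p14 i l))}

open Finset

section Cycle

variable {α β γ δ : Type*} [Fintype α] [Fintype β] [Fintype γ] [Fintype δ]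

def IsAdmissible (f12 : α → β → ℝ) (f23 : β → γ → ℝ) (f34 : γ → δ → ℝ) (f14 : α → δ → ℝ) :
    Prop :=
  (∀ i j, -1 ≤ f12 i j) ∧ (∀ j k, -1 ≤ f23 j k) ∧ (∀ k l, -1 ≤ f34 k l) ∧
    (∀ i l, -1 ≤ f14 i l) ∧ ∀ i j k l, 0 ≤ f12 i j + f23 j k + f34 k l + f14 i l

def cyclePairing (f12 : α → β → ℝ) (f23 : β → γ → ℝ) (f34 : γ → δ → ℝ) (f14 : α → δ → ℝ)
    (p12 : α → β → ℝ) (p23 : β → γ → ℝ) (p34 : γ → δ → ℝ) (p14 : α → δ → ℝ) : ℝ :=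
  (∑ i, ∑ j, f12 i j * p12 i j) + (∑ j, ∑ k, f23 j k * p23 j k) +
    (∑ k, ∑ l, f34 k l * p34 k l) + (∑ i, ∑ l, f14 i l * p14 i l)

/-- Glued along their common `(x₂, x₄)`-marginal, `T` and `ν` form a sub-probability on `X`
whose two-dimensional marginals are dominated by the `p_S`. -/
structure IsSubGluing (p12 : α → β → ℝ) (p23 : β → γ → ℝ) (p34 : γ → δ → ℝ) (p14 : α → δ → ℝ)
    (T : α → β → δ → ℝ) (ν : β → γ → δ → ℝ) : Prop where
  T_nonneg : ∀ i j l, 0 ≤ T i j l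
  ν_nonneg : ∀ j k l, 0 ≤ ν j k l
  sum_T_le_left : ∀ i j, ∑ l, T i j l ≤ p12 i j
  sum_T_le_right : ∀ i l, ∑ j, T i j l ≤ p14 i l
  sum_ν_le_left : ∀ j k, ∑ l, ν j k l ≤ p23 j k
  sum_ν_le_right : ∀ k l, ∑ j, ν j k l ≤ p34 k l
  sum_T_eq_sum_ν : ∀ j l, ∑ i, T i j l = ∑ k, ν j k l

lemma sum_sum_mul_sub_le {f p q : α → β → ℝ} (hf : ∀ a b, -1 ≤ f a b)
    (hqp : ∀ a b, q a b ≤ p a b) :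
    ∑ a, ∑ b, f a b * q a b - ∑ a, ∑ b, f a b * p a b ≤
      ∑ a, ∑ b, p a b - ∑ a, ∑ b, q a b := by
  have h : ∀ a b, f a b * q a b - f a b * p a b ≤ p a b - q a b := fun a b => by
    nlinarith [hf a b, hqp a b]
  simpa only [sum_sub_distrib] using sum_le_sum fun a _ => sum_le_sum fun b _ => h a b

variable {p12 : α → β → ℝ} {p23 : β → γ → ℝ} {p34 : γ → δ → ℝ} {p14 : α → δ → ℝ}
  {f12 : α → β → ℝ} {f23 : β → γ → ℝ} {f34 : γ → δ → ℝ} {f14 : α → δ → ℝ}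
  {T : α → β → δ → ℝ} {ν : β → γ → δ → ℝ}

/-- Over a fixed value `(j, l)`, pair the `T`-mass with the `ν`-mass through a minimiser `k₀`
of `f23 j k + f34 k l`: admissibility at `(i, j, k₀, l)` does the rest. -/
lemma IsSubGluing.sum_add_sum_nonneg [Nonempty γ] (hg : IsSubGluing p12 p23 p34 p14 T ν)
    (hf : IsAdmissible f12 f23 f34 f14) (j : β) (l : δ) :
    0 ≤ ∑ i, (f12 i j + f14 i l) * T i j l + ∑ k, (f23 j k + f34 k l) * ν j k l := by
  obtain ⟨k₀, -, hk₀⟩ := exists_min_image univ (fun k => f23 j k + f34 k l) univ_nonempty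
  have hν : (f23 j k₀ + f34 k₀ l) * ∑ k, ν j k l ≤ ∑ k, (f23 j k + f34 k l) * ν j k l := by
    rw [mul_sum]
    exact sum_le_sum fun k _ => mul_le_mul_of_nonneg_right (hk₀ k (mem_univ k)) (hg.ν_nonneg j k l)
  have hT : 0 ≤ ∑ i, (f12 i j + f14 i l) * T i j l + (f23 j k₀ + f34 k₀ l) * ∑ i, T i j l := by
    rw [mul_sum, ← sum_add_distrib]
    refine sum_nonneg fun i _ => ?_
    rw [← add_mul]
    exact mul_nonneg (by linarith [hf.2.2.2.2 i j k₀ l]) (hg.T_nonneg i j l)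
  rw [hg.sum_T_eq_sum_ν] at hT
  linarith

lemma IsSubGluing.cyclePairing_marginals_nonneg [Nonempty γ]
    (hg : IsSubGluing p12 p23 p34 p14 T ν) (hf : IsAdmissible f12 f23 f34 f14) :
    0 ≤ cyclePairing f12 f23 f34 f14 (fun i j => ∑ l, T i j l) (fun j k => ∑ l, ν j k l)
      (fun k l => ∑ j, ν j k l) (fun i l => ∑ j, T i j l) := by
  have key := sum_nonneg fun j (_ : j ∈ univ) => sum_nonneg fun l (_ : l ∈ univ) =>
    hg.sum_add_sum_nonneg hf j l
  simp only [add_mul, sum_add_distrib] at key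
  have e12 : ∑ j, ∑ l, ∑ i, f12 i j * T i j l = ∑ i, ∑ j, f12 i j * ∑ l, T i j l := by
    simp only [mul_sum]
    exact (sum_congr rfl fun _ _ => sum_comm).trans sum_comm
  have e14 : ∑ j, ∑ l, ∑ i, f14 i l * T i j l = ∑ i, ∑ l, f14 i l * ∑ j, T i j l := by
    simp only [mul_sum]
    exact sum_comm.trans ((sum_congr rfl fun _ _ => sum_comm).trans sum_comm)
  have e23 : ∑ j, ∑ l, ∑ k, f23 j k * ν j k l = ∑ j, ∑ k, f23 j k * ∑ l, ν j k l := by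
    simp only [mul_sum]
    exact sum_congr rfl fun _ _ => sum_comm
  have e34 : ∑ j, ∑ l, ∑ k, f34 k l * ν j k l = ∑ k, ∑ l, f34 k l * ∑ j, ν j k l := by
    simp only [mul_sum]
    exact sum_comm.trans ((sum_congr rfl fun _ _ => sum_comm).trans sum_comm)
  rw [e12, e14, e23, e34] at key
  unfold cyclePairing
  linarith

lemma IsSubGluing.neg_cyclePairing_le [Nonempty γ] (hg : IsSubGluing p12 p23 p34 p14 T ν)
    (hf : IsAdmissible f12 f23 f34 f14) (h12 : ∑ i, ∑ j, p12 i j = 1)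
    (h23 : ∑ j, ∑ k, p23 j k = 1) (h34 : ∑ k, ∑ l, p34 k l = 1) (h14 : ∑ i, ∑ l, p14 i l = 1) :
    -cyclePairing f12 f23 f34 f14 p12 p23 p34 p14 ≤ 4 * (1 - ∑ i, ∑ j, ∑ l, T i j l) := by
  have hjl : ∑ j, ∑ l, ∑ k, ν j k l = ∑ i, ∑ j, ∑ l, T i j l := by
    simp only [← hg.sum_T_eq_sum_ν]
    exact (sum_congr rfl fun _ _ => sum_comm).trans sum_comm
  have m14 : ∑ i, ∑ l, ∑ j, T i j l = ∑ i, ∑ j, ∑ l, T i j l :=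
    sum_congr rfl fun _ _ => sum_comm
  have m23 : ∑ j, ∑ k, ∑ l, ν j k l = ∑ i, ∑ j, ∑ l, T i j l :=
    (sum_congr rfl fun _ _ => sum_comm).trans hjl
  have m34 : ∑ k, ∑ l, ∑ j, ν j k l = ∑ i, ∑ j, ∑ l, T i j l :=
    (sum_comm.trans ((sum_congr rfl fun _ _ => sum_comm).trans sum_comm)).symm.trans hjl
  have h0 := hg.cyclePairing_marginals_nonneg hf
  obtain ⟨hf12, hf23, hf34, hf14, -⟩ := hf
  have r12 := sum_sum_mul_sub_le hf12 hg.sum_T_le_left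
  have r23 := sum_sum_mul_sub_le hf23 hg.sum_ν_le_left
  have r34 := sum_sum_mul_sub_le hf34 hg.sum_ν_le_right
  have r14 := sum_sum_mul_sub_le hf14 hg.sum_T_le_right
  unfold cyclePairing at h0 ⊢
  linarith

lemma IsSubGluing.of_perm (σ : Equiv.Perm γ) (τ : Equiv.Perm δ)
    (hg : IsSubGluing p12 (fun j k => p23 j (σ k)) (fun k l => p34 (σ k) (τ l))
      (fun i l => p14 i (τ l)) T ν) :
    IsSubGluing p12 p23 p34 p14 (fun i j l => T i j (τ.symm l))
      (fun j k l => ν j (σ.symm k) (τ.symm l)) where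
  T_nonneg i j l := hg.T_nonneg i j _
  ν_nonneg j k l := hg.ν_nonneg j _ _
  sum_T_le_left i j := (Equiv.sum_comp τ.symm (T i j)).trans_le (hg.sum_T_le_left i j)
  sum_T_le_right i l := by simpa using hg.sum_T_le_right i (τ.symm l)
  sum_ν_le_left j k := by
    simpa [Equiv.sum_comp τ.symm (ν j _)] using hg.sum_ν_le_left j (σ.symm k)
  sum_ν_le_right k l := by simpa using hg.sum_ν_le_right (σ.symm k) (τ.symm l)
  sum_T_eq_sum_ν j l := (hg.sum_T_eq_sum_ν j (τ.symm l)).trans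
    (Equiv.sum_comp σ.symm fun k => ν j k (τ.symm l)).symm

lemma sum_sum_ite_mul (A : α → β → Prop) [∀ a b, Decidable (A a b)] (p : α → β → ℝ) :
    ∑ a, ∑ b, (if A a b then (3 : ℝ) else -1) * p a b =
      4 * ∑ a, ∑ b, (if A a b then p a b else 0) - ∑ a, ∑ b, p a b := by
  simp only [mul_sum, ← sum_sub_distrib]
  refine sum_congr rfl fun a _ => sum_congr rfl fun b _ => ?_
  split_ifs <;> ring

lemma exists_isAdmissible_of_cover (A12 : α → β → Prop) (A23 : β → γ → Prop)
    (A34 : γ → δ → Prop) (A14 : α → δ → Prop) [∀ i j, Decidable (A12 i j)]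
    [∀ j k, Decidable (A23 j k)] [∀ k l, Decidable (A34 k l)] [∀ i l, Decidable (A14 i l)]
    (hA : ∀ i j k l, A12 i j ∨ A23 j k ∨ A34 k l ∨ A14 i l) (h12 : ∑ i, ∑ j, p12 i j = 1)
    (h23 : ∑ j, ∑ k, p23 j k = 1) (h34 : ∑ k, ∑ l, p34 k l = 1) (h14 : ∑ i, ∑ l, p14 i l = 1) :
    ∃ f12 f23 f34 f14, IsAdmissible f12 f23 f34 f14 ∧
      -(1 / 4) * cyclePairing f12 f23 f34 f14 p12 p23 p34 p14 =
        1 - ((∑ i, ∑ j, if A12 i j then p12 i j else 0) +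
          (∑ j, ∑ k, if A23 j k then p23 j k else 0) + (∑ k, ∑ l, if A34 k l then p34 k l else 0) +
          ∑ i, ∑ l, if A14 i l then p14 i l else 0) := by
  refine ⟨fun i j => if A12 i j then 3 else -1, fun j k => if A23 j k then 3 else -1,
    fun k l => if A34 k l then 3 else -1, fun i l => if A14 i l then 3 else -1,
    ⟨fun i j => ?_, fun j k => ?_, fun k l => ?_, fun i l => ?_, fun i j k l => ?_⟩, ?_⟩
  iterate 4 · dsimp only; split_ifs <;> norm_num
  · rcases hA i j k l with h | h | h | h <;> simp only [h, if_true] <;> split_ifs <;> norm_num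
  · simp only [cyclePairing, sum_sum_ite_mul, h12, h23, h34, h14]
    ring

end Cycle

lemma exists_mem_Icc_sum_eq {ι : Type*} [Fintype ι] {lo hi : ι → ℝ} {c : ℝ}
    (hle : ∀ i, lo i ≤ hi i) (hc : c ∈ Set.Icc (∑ i, lo i) (∑ i, hi i)) :
    ∃ t : ι → ℝ, (∀ i, t i ∈ Set.Icc (lo i) (hi i)) ∧ ∑ i, t i = c := by
  obtain ⟨θ, ⟨hθ₀, hθ₁⟩, hθ⟩ := intermediate_value_Icc zero_le_one
    (f := fun θ : ℝ => ∑ i, (lo i + θ * (hi i - lo i))) (by fun_prop) (by simpa using hc)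
  exact ⟨fun i => lo i + θ * (hi i - lo i),
    fun i => ⟨by nlinarith [hle i], by nlinarith [hle i]⟩, hθ⟩

lemma max_sub_zero_eq_sub_min (a b : ℝ) : max (a - b) 0 = a - min a b := by
  rw [← max_sub_sub_left, sub_self, max_comm]

lemma max_sub_le_min {x₀ x₁ y₀ y₁ : ℝ} (hx₀ : 0 ≤ x₀) (hx₁ : 0 ≤ x₁) (hy₀ : 0 ≤ y₀)
    (hy₁ : 0 ≤ y₁) (h : x₀ + x₁ = y₀ + y₁) : max (y₀ - x₁) 0 ≤ min x₀ y₀ :=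
  max_le (le_min (by linarith) (by linarith)) (le_min hx₀ hy₀)

section Table

def table2 (x y : Fin 2 → ℝ) (t : ℝ) : Fin 2 → Fin 2 → ℝ :=
  ![![t, x 0 - t], ![y 0 - t, x 1 - y 0 + t]]

variable {x y : Fin 2 → ℝ} {t : ℝ}

lemma sum_table2_left : ∀ j, ∑ l, table2 x y t j l = x j := by
  refine Fin.forall_fin_two.2 ⟨?_, ?_⟩ <;>
    simp only [table2, Fin.sum_univ_two, Matrix.cons_val_zero, Matrix.cons_val_one,
      Matrix.cons_val_fin_one] <;>
    ring

lemma sum_table2_right (h : x 0 + x 1 = y 0 + y 1) : ∀ l, ∑ j, table2 x y t j l = y l := by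
  refine Fin.forall_fin_two.2 ⟨?_, ?_⟩ <;>
    simp only [table2, Fin.sum_univ_two, Matrix.cons_val_zero, Matrix.cons_val_one,
      Matrix.cons_val_fin_one] <;>
    linarith

lemma table2_nonneg (ht : t ∈ Set.Icc (max (y 0 - x 1) 0) (min (x 0) (y 0))) :
    ∀ j l, 0 ≤ table2 x y t j l := by
  obtain ⟨h₁, h₂⟩ := ht
  rw [max_le_iff] at h₁
  rw [le_min_iff] at h₂
  refine Fin.forall_fin_two.2 ⟨Fin.forall_fin_two.2 ⟨?_, ?_⟩, Fin.forall_fin_two.2 ⟨?_, ?_⟩⟩ <;>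
    simp only [table2, Matrix.cons_val_zero, Matrix.cons_val_one, Matrix.cons_val_fin_one] <;>
    linarith

end Table

section Chain

variable {r : ℕ} {p12 : Fin r → Fin 2 → ℝ} {p23 p34 : Fin 2 → Fin 2 → ℝ}
  {p14 : Fin r → Fin 2 → ℝ}

lemma RChain_eq_sSup (r : ℕ) (p12 : Fin r → Fin 2 → ℝ) (p23 p34 : Fin 2 → Fin 2 → ℝ)
    (p14 : Fin r → Fin 2 → ℝ) :
    RChain r p12 p23 p34 p14 = sSup {t | ∃ f12 f23 f34 f14, IsAdmissible f12 f23 f34 f14 ∧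
      t = -(1 / 4) * cyclePairing f12 f23 f34 f14 p12 p23 p34 p14} := by
  simp only [RChain, IsAdmissible, cyclePairing, and_assoc]

def chainDefect (p12 : Fin r → Fin 2 → ℝ) (p23 p34 : Fin 2 → Fin 2 → ℝ)
    (p14 : Fin r → Fin 2 → ℝ) (k l : Fin 2) : ℝ :=
  p34 k l - p23 1 k - ∑ i, min (p12 i 0) (p14 i l)

lemma ProbChain.comp_perm (h : ProbChain r p12 p23 p34 p14) (σ τ : Equiv.Perm (Fin 2)) :
    ProbChain r p12 (fun j k => p23 j (σ k)) (fun k l => p34 (σ k) (τ l))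
      (fun i l => p14 i (τ l)) := by
  obtain ⟨h12, h23, h34, h14, hs12, hs23, hs34, hs14⟩ := h
  refine ⟨h12, fun _ _ => h23 _ _, fun _ _ => h34 _ _, fun _ _ => h14 _ _, hs12, ?_, ?_, ?_⟩
  · simpa only [Equiv.sum_comp] using hs23
  · simp only [Equiv.sum_comp]
    rwa [Equiv.sum_comp σ fun k => ∑ l, p34 k l]
  · simpa only [Equiv.sum_comp] using hs14

lemma ConsChain.comp_perm (h : ConsChain r p12 p23 p34 p14) (σ τ : Equiv.Perm (Fin 2)) :
    ConsChain r p12 (fun j k => p23 j (σ k)) (fun k l => p34 (σ k) (τ l))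
      (fun i l => p14 i (τ l)) := by
  obtain ⟨h1, h2, h3, h4⟩ := h
  refine ⟨fun i => ?_, fun j => ?_, fun k => ?_, fun l => ?_⟩
  · simpa only [Equiv.sum_comp] using h1 i
  · simpa only [Equiv.sum_comp] using h2 j
  · simpa only [Equiv.sum_comp] using h3 (σ k)
  · exact (Equiv.sum_comp σ fun k => p34 k (τ l)).trans (h4 (τ l))

lemma sum_ite_add_sum_ite_eq_min {a b : Fin 2 → ℝ} (h : a 0 + a 1 = b 0 + b 1) (l : Fin 2) :
    ((∑ j, if (j = 0 ↔ a 0 ≤ b l) then a j else 0) +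
      ∑ l', if (l' = l ↔ ¬ a 0 ≤ b l) then b l' else 0) = a 1 + 2 * min (a 0) (b l) - b l := by
  rcases le_or_gt (a 0) (b l) with hab | hab
  · rw [min_eq_left hab]
    fin_cases l <;> simp only [Fin.zero_eta, Fin.mk_one] at hab ⊢ <;>
      simp only [hab, iff_true, not_true_eq_false, iff_false, ite_not, sum_ite_eq', mem_univ,
        ↓reduceIte, Fin.sum_univ_two, one_ne_zero, zero_ne_one, zero_add, add_zero] <;> linarith
  · rw [min_eq_right hab.le]
    fin_cases l <;> simp only [Fin.zero_eta, Fin.mk_one] at hab ⊢ <;>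
      simp only [hab.not_ge, iff_true, iff_false, ite_not, sum_ite_eq', mem_univ, ↓reduceIte,
        Fin.sum_univ_two, one_ne_zero, zero_add, not_false_eq_true] <;>
      linarith

/-- The cover: `{(0, k+1), (1, k)}` on `X₂ × X₃`, `{(k, l+1), (k+1, l)}` on `X₃ × X₄`, and for
each `i` either `{j = 0}`, `{l' ≠ l}` or `{j = 1}`, `{l' = l}`, whichever is lighter. -/
lemma exists_isAdmissible_eq_two_mul_chainDefect (hprob : ProbChain r p12 p23 p34 p14)
    (hcons : ConsChain r p12 p23 p34 p14) (k l : Fin 2) :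
    ∃ f12 f23 f34 f14, IsAdmissible f12 f23 f34 f14 ∧
      -(1 / 4) * cyclePairing f12 f23 f34 f14 p12 p23 p34 p14 =
        2 * chainDefect p12 p23 p34 p14 k l := by
  obtain ⟨-, -, -, -, h12, h23, h34, h14⟩ := hprob
  obtain ⟨hc1, hc2, hc3, hc4⟩ := hcons
  have hcover : ∀ (b : Bool) (j k' l' : Fin 2),
      (j = 0 ↔ b) ∨ (j = 1 ↔ k' = k) ∨ (k' = k ↔ l' ≠ l) ∨ (l' = l ↔ ¬ b) := by
    fin_cases k <;> fin_cases l <;> decide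
  obtain ⟨f12, f23, f34, f14, hf, hval⟩ := exists_isAdmissible_of_cover
    (fun i j => j = 0 ↔ p12 i 0 ≤ p14 i l) (fun j k' => j = 1 ↔ k' = k)
    (fun k' l' => k' = k ↔ l' ≠ l) (fun i l' => l' = l ↔ ¬ p12 i 0 ≤ p14 i l)
    (fun i j k' l' => by simpa using hcover (decide (p12 i 0 ≤ p14 i l)) j k' l')
    h12 h23 h34 h14
  refine ⟨f12, f23, f34, f14, hf, hval.trans ?_⟩
  have hi i := sum_ite_add_sum_ite_eq_min (a := p12 i) (b := p14 i)
    (by simpa only [Fin.sum_univ_two] using hc1 i) l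
  rw [show ∀ a b c d : ℝ, a + b + c + d = a + d + b + c from fun _ _ _ _ => by ring,
    ← sum_add_distrib, sum_congr rfl fun i _ => hi i]
  simp only [sum_add_distrib, sum_sub_distrib, ← mul_sum, chainDefect]
  fin_cases k <;> fin_cases l <;>
    simp only [Fin.sum_univ_two, Fin.forall_fin_two, Fin.zero_eta, Fin.mk_one, iff_true, iff_false,
      ite_not, ↓reduceIte, one_ne_zero, zero_ne_one, zero_add, add_zero, ne_eq, not_true_eq_false,
      not_false_eq_true] at h23 hc2 hc3 hc4 ⊢ <;>
    linarith

lemma isSubGluing_table2 (x y : Fin r → Fin 2 → ℝ) (t : Fin r → ℝ)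
    (x' y' : Fin 2 → Fin 2 → ℝ) (w : Fin 2 → ℝ)
    (hx : ∀ i j, x i j ≤ p12 i j) (hy : ∀ i l, y i l ≤ p14 i l)
    (hx' : ∀ k j, x' k j ≤ p23 j k) (hy' : ∀ k l, y' k l ≤ p34 k l)
    (hxy : ∀ i, x i 0 + x i 1 = y i 0 + y i 1) (hxy' : ∀ k, x' k 0 + x' k 1 = y' k 0 + y' k 1)
    (ht : ∀ i, t i ∈ Set.Icc (max (y i 0 - x i 1) 0) (min (x i 0) (y i 0)))
    (hw : ∀ k, w k ∈ Set.Icc (max (y' k 0 - x' k 1) 0) (min (x' k 0) (y' k 0)))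
    (hsum_t : ∑ i, t i = ∑ k, w k) (hsum_x : ∀ j, ∑ i, x i j = ∑ k, x' k j)
    (hsum_y : ∑ i, y i 0 = ∑ k, y' k 0) :
    IsSubGluing p12 p23 p34 p14 (fun i => table2 (x i) (y i) (t i))
      (fun j k l => table2 (x' k) (y' k) (w k) j l) where
  T_nonneg i := table2_nonneg (ht i)
  ν_nonneg j k l := table2_nonneg (hw k) j l
  sum_T_le_left i j := (sum_table2_left j).trans_le (hx i j)
  sum_T_le_right i l := (sum_table2_right (hxy i) l).trans_le (hy i l)
  sum_ν_le_left j k := (sum_table2_left j).trans_le (hx' k j)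
  sum_ν_le_right k l := (sum_table2_right (hxy' k) l).trans_le (hy' k l)
  sum_T_eq_sum_ν := by
    have h0 := hsum_x 0
    have h1 := hsum_x 1
    simp only [Fin.sum_univ_two] at h0 h1 hsum_t hsum_y
    refine Fin.forall_fin_two.2 ⟨Fin.forall_fin_two.2 ⟨?_, ?_⟩, Fin.forall_fin_two.2 ⟨?_, ?_⟩⟩ <;>
      simp only [table2, Matrix.cons_val_zero, Matrix.cons_val_one, Matrix.cons_val_fin_one,
        Fin.sum_univ_two, sum_add_distrib, sum_sub_distrib] <;>
      linarith

lemma sum_sub_le_sum_min (hprob : ProbChain r p12 p23 p34 p14)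
    (hcons : ConsChain r p12 p23 p34 p14) (l : Fin 2) :
    ∑ i, p14 i l - ∑ i, p12 i 1 ≤ ∑ i, min (p12 i 0) (p14 i l) := by
  rw [← sum_sub_distrib]
  refine sum_le_sum fun i _ => le_min ?_ (by linarith [hprob.1 i 1])
  have hl := single_le_sum (fun l _ => hprob.2.2.2.1 i l) (mem_univ l)
  rw [← hcons.1 i, Fin.sum_univ_two] at hl
  linarith

lemma sum_max_le_of_chainDefect_nonpos (hprob : ProbChain r p12 p23 p34 p14)
    (hcons : ConsChain r p12 p23 p34 p14) (l : Fin 2)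
    (h : ∀ k, chainDefect p12 p23 p34 p14 k l ≤ 0) :
    ∑ k, max (p34 k l - p23 1 k) 0 ≤ ∑ i, min (p12 i 0) (p14 i l) := by
  have hM : 0 ≤ ∑ i, min (p12 i 0) (p14 i l) :=
    sum_nonneg fun i _ => le_min (hprob.1 i 0) (hprob.2.2.2.1 i l)
  have hsub := sum_sub_le_sum_min hprob hcons l
  have h4 := hcons.2.2.2 l
  have h2 := hcons.2.1 1
  have h0 := h 0
  have h1 := h 1
  simp only [chainDefect, Fin.sum_univ_two] at h0 h1 h2 h4 ⊢
  rcases le_total (p34 0 l - p23 1 0) 0 with a | a <;>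
    rcases le_total (p34 1 l - p23 1 1) 0 with b | b <;>
    simp only [max_eq_left, max_eq_right, a, b] <;> linarith

/-- The corner intervals of the couplings of `(p12 i ·, p14 i ·)` and of `(p23 · k, p34 k ·)`
add up to two intervals, and the hypothesis says exactly that they overlap. -/
lemma exists_isSubGluing_of_sum_max_le (hprob : ProbChain r p12 p23 p34 p14)
    (hcons : ConsChain r p12 p23 p34 p14)
    (h : ∀ l, ∑ k, max (p34 k l - p23 1 k) 0 ≤ ∑ i, min (p12 i 0) (p14 i l)) :
    ∃ T ν, IsSubGluing p12 p23 p34 p14 T ν ∧ ∑ i, ∑ j, ∑ l, T i j l = 1 := by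
  obtain ⟨h12, h23, h34, h14, htot, -, -, -⟩ := hprob
  obtain ⟨hc1, hc2, hc3, hc4⟩ := hcons
  simp only [Fin.sum_univ_two] at hc1 hc3
  have hlowT : ∑ i, max (p14 i 0 - p12 i 1) 0 = ∑ i, p12 i 0 - ∑ i, min (p12 i 0) (p14 i 1) := by
    rw [← sum_sub_distrib]
    refine sum_congr rfl fun i _ => ?_
    rw [← max_sub_zero_eq_sub_min]
    congr 1
    linarith [hc1 i]
  have hhighν : ∑ k, min (p23 0 k) (p34 k 0) = ∑ k, p23 0 k - ∑ k, max (p34 k 1 - p23 1 k) 0 := by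
    rw [← sum_sub_distrib]
    refine sum_congr rfl fun k _ => ?_
    rw [show p34 k 1 - p23 1 k = p23 0 k - p34 k 0 by linarith [hc3 k],
      max_sub_zero_eq_sub_min]
    ring
  have hT i := max_sub_le_min (h12 i 0) (h12 i 1) (h14 i 0) (h14 i 1) (hc1 i)
  have hν k := max_sub_le_min (h23 0 k) (h23 1 k) (h34 k 0) (h34 k 1) (hc3 k)
  obtain ⟨t, ht, hts⟩ := exists_mem_Icc_sum_eq hT
    ⟨le_max_left _ (∑ k, max (p34 k 0 - p23 1 k) 0), max_le (sum_le_sum fun i _ => hT i) (h 0)⟩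
  obtain ⟨w, hw, hws⟩ := exists_mem_Icc_sum_eq hν
    ⟨le_max_right (∑ i, max (p14 i 0 - p12 i 1) 0) _,
      max_le (by rw [hlowT, hhighν, ← hc2 0]; linarith [h 1]) (sum_le_sum fun k _ => hν k)⟩
  refine ⟨_, _, isSubGluing_table2 p12 p14 t (fun k j => p23 j k) p34 w
    (fun _ _ => le_rfl) (fun _ _ => le_rfl) (fun _ _ => le_rfl) (fun _ _ => le_rfl) hc1 hc3
    ht hw (hts.trans hws.symm) hc2 (hc4 0).symm, ?_⟩
  simpa only [sum_table2_left] using htot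

lemma exists_sum_eq_chainDefect (hprob : ProbChain r p12 p23 p34 p14)
    (hcons : ConsChain r p12 p23 p34 p14) (hpos : 0 ≤ chainDefect p12 p23 p34 p14 0 0) :
    ∃ u v : Fin r → ℝ, (∀ i, 0 ≤ u i ∧ u i ≤ p12 i 0 - min (p12 i 0) (p14 i 0)) ∧
      (∀ i, 0 ≤ v i ∧ v i ≤ p14 i 0 - min (p12 i 0) (p14 i 0)) ∧
      ∑ i, u i = chainDefect p12 p23 p34 p14 0 0 ∧ ∑ i, v i = chainDefect p12 p23 p34 p14 0 0 := by
  obtain ⟨-, h23, h34, -⟩ := hprob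
  obtain ⟨-, hc2, hc3, hc4⟩ := hcons
  simp only [Fin.sum_univ_two] at hc2 hc3 hc4
  simp only [chainDefect] at hpos ⊢
  obtain ⟨u, hu, hus⟩ := exists_mem_Icc_sum_eq (lo := fun _ => 0)
    (hi := fun i => p12 i 0 - min (p12 i 0) (p14 i 0)) (fun i => sub_nonneg.2 (min_le_left _ _))
    (c := p34 0 0 - p23 1 0 - ∑ i, min (p12 i 0) (p14 i 0))
    ⟨by simpa using hpos, by rw [sum_sub_distrib, hc2 0]; linarith [hc3 0, h34 0 1, h23 0 1]⟩
  obtain ⟨v, hv, hvs⟩ := exists_mem_Icc_sum_eq (lo := fun _ => 0)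
    (hi := fun i => p14 i 0 - min (p12 i 0) (p14 i 0)) (fun i => sub_nonneg.2 (min_le_right _ _))
    (c := p34 0 0 - p23 1 0 - ∑ i, min (p12 i 0) (p14 i 0))
    ⟨by simpa using hpos, by rw [sum_sub_distrib, ← hc4 0]; linarith [h34 1 0, h23 1 0]⟩
  exact ⟨u, v, hu, hv, hus, hvs⟩

/-- Take mass `δ = chainDefect 0 0` off each of `p12` and `p14` (spread over `i` by `u` and
`v`) and off `p23` and `p34` at `(0, 0)` and `(1, 1)`; then the couplings with corners
`min (p12 i 0) (p14 i 0)` glue with those with corners `∑ i, min (p12 i 0) (p14 i 0)` and `0`. -/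
lemma exists_isSubGluing_of_chainDefect_pos (hprob : ProbChain r p12 p23 p34 p14)
    (hcons : ConsChain r p12 p23 p34 p14) (hpos : 0 < chainDefect p12 p23 p34 p14 0 0) :
    ∃ T ν, IsSubGluing p12 p23 p34 p14 T ν ∧
      ∑ i, ∑ j, ∑ l, T i j l = 1 - 2 * chainDefect p12 p23 p34 p14 0 0 := by
  have hsub := sum_sub_le_sum_min hprob hcons 0
  obtain ⟨u, v, hu, hv, hus, hvs⟩ := exists_sum_eq_chainDefect hprob hcons hpos.le
  obtain ⟨h12, h23, h34, h14, htot, -, -, -⟩ := hprob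
  obtain ⟨hc1, hc2, hc3, hc4⟩ := hcons
  simp only [Fin.sum_univ_two, sum_add_distrib] at hc1 hc2 hc3 hc4 htot
  set δ := chainDefect p12 p23 p34 p14 0 0 with hδ
  set m := fun i => min (p12 i 0) (p14 i 0)
  have hM : 0 ≤ ∑ i, m i := sum_nonneg fun i _ => le_min (h12 i 0) (h14 i 0)
  replace hδ : δ = p34 0 0 - p23 1 0 - ∑ i, m i := hδ
  have hmT : ∀ i, m i ∈ Set.Icc (max (p14 i 0 - v i - (p12 i 1 - v i)) 0)
      (min (p12 i 0 - u i) (p14 i 0 - v i)) := fun i => by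
    refine ⟨?_, le_min (by linarith [hu i]) (by linarith [hv i])⟩
    rw [sub_sub_sub_cancel_right]
    exact max_sub_le_min (h12 i 0) (h12 i 1) (h14 i 0) (h14 i 1) (hc1 i)
  refine ⟨_, _, isSubGluing_table2
    (fun i => ![p12 i 0 - u i, p12 i 1 - v i]) (fun i => ![p14 i 0 - v i, p14 i 1 - u i]) m
    ![![p23 0 0 - δ, p23 1 0], ![p23 0 1, p23 1 1 - δ]]
    ![![p34 0 0 - δ, p34 0 1], ![p34 1 0, p34 1 1 - δ]] ![∑ i, m i, 0]
    (fun i => Fin.forall_fin_two.2 ⟨?_, ?_⟩) (fun i => Fin.forall_fin_two.2 ⟨?_, ?_⟩)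
    (Fin.forall_fin_two.2 ⟨Fin.forall_fin_two.2 ⟨?_, ?_⟩, Fin.forall_fin_two.2 ⟨?_, ?_⟩⟩)
    (Fin.forall_fin_two.2 ⟨Fin.forall_fin_two.2 ⟨?_, ?_⟩, Fin.forall_fin_two.2 ⟨?_, ?_⟩⟩)
    (fun i => ?_) (Fin.forall_fin_two.2 ⟨?_, ?_⟩) hmT (Fin.forall_fin_two.2 ⟨?_, ?_⟩) ?_
    (Fin.forall_fin_two.2 ⟨?_, ?_⟩) ?_, ?_⟩
  rotate_right
  · simp only [sum_table2_left]
    simp only [Fin.sum_univ_two, Matrix.cons_val_zero, Matrix.cons_val_one,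
      Matrix.cons_val_fin_one, sum_add_distrib, sum_sub_distrib]
    linarith
  all_goals simp only [Matrix.cons_val_zero, Matrix.cons_val_one, Matrix.cons_val_fin_one,
    Set.mem_Icc, max_le_iff, le_min_iff, Fin.sum_univ_two, sum_sub_distrib]
  · linarith [hu i]
  · linarith [hv i]
  · linarith [hv i]
  · linarith [hu i]
  iterate 8 · linarith
  · linarith [hc1 i]
  · linarith [hc3 0]
  · linarith [hc3 1]
  · exact ⟨⟨by linarith, hM⟩, by linarith [hc3 0, h34 0 1], by linarith [h23 1 0]⟩
  · exact ⟨⟨by linarith [hc4 0, hc2 1], le_rfl⟩, h23 0 1, h34 1 0⟩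
  · exact (add_zero _).symm
  · linarith [hc2 0]
  · linarith [hc2 1]
  · linarith [hc4 0]

lemma exists_isSubGluing (hprob : ProbChain r p12 p23 p34 p14)
    (hcons : ConsChain r p12 p23 p34 p14) :
    ∃ T ν, IsSubGluing p12 p23 p34 p14 T ν ∧
      ∃ k l, 1 - 2 * max (chainDefect p12 p23 p34 p14 k l) 0 ≤ ∑ i, ∑ j, ∑ l, T i j l := by
  by_cases hpos : ∃ k l, 0 < chainDefect p12 p23 p34 p14 k l
  · obtain ⟨k, l, hkl⟩ := hpos
    obtain ⟨T, ν, hg, hmass⟩ := exists_isSubGluing_of_chainDefect_pos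
      (hprob.comp_perm (Equiv.addRight k) (Equiv.addRight l))
      (hcons.comp_perm (Equiv.addRight k) (Equiv.addRight l)) (by simpa [chainDefect] using hkl)
    refine ⟨_, _, hg.of_perm (Equiv.addRight k) (Equiv.addRight l), k, l, ?_⟩
    simp only [Equiv.sum_comp]
    rw [hmass, max_eq_left hkl.le]
    simp [chainDefect]
  · simp only [not_exists, not_lt] at hpos
    obtain ⟨T, ν, hg, hmass⟩ := exists_isSubGluing_of_sum_max_le hprob hcons
      fun l => sum_max_le_of_chainDefect_nonpos hprob hcons l fun k => hpos k l
    exact ⟨T, ν, hg, 0, 0, by rw [hmass, max_eq_right (hpos 0 0)]; norm_num⟩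

end Chain

/-- Labels are shifted: `1 ∈ [2]` is `(0 : Fin 2)` and `2 ∈ [2]` is `(1 : Fin 2)`. -/
theorem statement_16_general (r : ℕ)
    (p12 : Fin r → Fin 2 → ℝ) (p23 p34 : Fin 2 → Fin 2 → ℝ) (p14 : Fin r → Fin 2 → ℝ)
    (hprob : ProbChain r p12 p23 p34 p14) (hcons : ConsChain r p12 p23 p34 p14) :
    RChain r p12 p23 p34 p14 =
      2 * sSup {t | ∃ k l : Fin 2,
        t = max (p34 k l - p23 1 k - ∑ i, min (p12 i 0) (p14 i l)) 0} := by
  obtain ⟨⟨k₀, l₀⟩, hmax⟩ :=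
    Finite.exists_max fun kl : Fin 2 × Fin 2 => chainDefect p12 p23 p34 p14 kl.1 kl.2
  have hsup : sSup {t | ∃ k l : Fin 2,
      t = max (p34 k l - p23 1 k - ∑ i, min (p12 i 0) (p14 i l)) 0} =
        max (chainDefect p12 p23 p34 p14 k₀ l₀) 0 :=
    IsGreatest.csSup_eq ⟨⟨k₀, l₀, rfl⟩, by
      rintro t ⟨k, l, rfl⟩
      exact max_le_max_right 0 (hmax (k, l))⟩
  rw [hsup, RChain_eq_sSup]
  refine IsGreatest.csSup_eq ⟨?_, ?_⟩
  · rcases le_total (chainDefect p12 p23 p34 p14 k₀ l₀) 0 with h | h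
    · refine ⟨0, 0, 0, 0, ⟨fun _ _ => ?_, fun _ _ => ?_, fun _ _ => ?_, fun _ _ => ?_,
        fun _ _ _ _ => ?_⟩, ?_⟩ <;> simp [cyclePairing, h]
    · obtain ⟨f12, f23, f34, f14, hf, hval⟩ :=
        exists_isAdmissible_eq_two_mul_chainDefect hprob hcons k₀ l₀
      exact ⟨f12, f23, f34, f14, hf, by rw [hval, max_eq_left h]⟩
  · rintro t ⟨f12, f23, f34, f14, hf, rfl⟩
    obtain ⟨T, ν, hg, k, l, hmass⟩ := exists_isSubGluing hprob hcons
    obtain ⟨-, -, -, -, h12, h23, h34, h14⟩ := hprob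
    have hupper := hg.neg_cyclePairing_le hf h12 h23 h34 h14
    have hkl := max_le_max_right 0 (hmax (k, l))
    linarith

/-- exact incompatibility index for the chain pattern on
`[r] × [2] × [2] × [2]`. The value `1 ∈ [2]` corresponds to `(0 : Fin 2)` and
`2 ∈ [2]` to `(1 : Fin 2)`. -/
theorem statement_16 (r : ℕ) (hr : 0 < r)
    (p12 : Fin r → Fin 2 → ℝ) (p23 p34 : Fin 2 → Fin 2 → ℝ) (p14 : Fin r → Fin 2 → ℝ)
    (hprob : ProbChain r p12 p23 p34 p14) (hcons : ConsChain r p12 p23 p34 p14) :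
    RChain r p12 p23 p34 p14 =
      2 * sSup {t | ∃ k l : Fin 2,
        t = max (p34 k l - p23 1 k - ∑ i, min (p12 i 0) (p14 i l)) 0} :=
  statement_16_general r p12 p23 p34 p14 hprob hcons
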